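/- arXiv:1806.08003 — 3 statements merged into one kernel-verified Lean document; each statement's English description precedes it below -/
import Mathlib

section
/- For every restricted root λ ∈ Σ and every nonzero X ∈ 𝔤_λ, the subspace [𝔪, X] := {[Z, X] : Z ∈ 𝔪} (more precisely, its linear span) equals the β_σ-orthogonal complement of X inside 𝔤_λ, i.e. [𝔪, X] = {Y ∈ 𝔤_λ : β_σ(X, Y) = 0}. In particular, 𝔤_λ decomposes as the direct sum 𝔤_λ = ℝ·X ⊕ [𝔪, X]. -/
/-!
Put `S = [X, σX]`. It centralizes `𝔞` and lies in `𝔭`, hence in `𝔞`, and `β(S, H) = λ(H) β(X, σX)`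
gives `λ(S) < 0`. Since `β(Z, S) = 0` for `Z ∈ 𝔨`, the bracket `[𝔪, X]` is `β_σ`-orthogonal to `X`.
Conversely let `Y ∈ 𝔤_λ` be `β_σ`-orthogonal to `X` and to `[𝔪, X]`. Then `T = [σX, Y]` centralizes
`𝔞` and is `β`-orthogonal to `𝔞`, so `T ∈ 𝔪`, and `β_σ(T, T) = β_σ([T, X], Y) = 0` gives `T = 0`.
The Jacobi identity now yields `λ(S) β_σ(Y, Y) = β_σ([X, Y], [X, Y]) ≥ 0`, so `Y = 0`. Hence the
`β_σ`-orthogonal complement of `ℝX + [𝔪, X]` in `𝔤_λ` is zero.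
-/

/-- The restricted root space `𝔤_λ = {X ∈ 𝔤 : [H, X] = λ(H) • X for all H ∈ 𝔞}`. -/
def rootSpace' {𝔤 : Type} [LieRing 𝔤] [LieAlgebra ℝ 𝔤]
    (𝔞 : LieSubalgebra ℝ 𝔤) (lam : Module.Dual ℝ 𝔞) : Submodule ℝ 𝔤 where
  carrier := {X | ∀ H : 𝔞, ⁅(H : 𝔤), X⁆ = lam H • X}
  add_mem' := fun {a b} ha hb H => by rw [lie_add, ha H, hb H, smul_add]
  zero_mem' := fun H => by simp
  smul_mem' := fun t X hX H => by rw [lie_smul, hX H, smul_comm]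

/-- The subspace `𝔪 = {Z ∈ 𝔨 : [H, Z] = 0 for all H ∈ 𝔞}`, where `𝔨` is the fixed-point
set of the Cartan involution `σ`. -/
def mSub {𝔤 : Type} [LieRing 𝔤] [LieAlgebra ℝ 𝔤]
    (σ : 𝔤 →ₗ⁅ℝ⁆ 𝔤) (𝔞 : LieSubalgebra ℝ 𝔤) : Submodule ℝ 𝔤 where
  carrier := {Z | σ Z = Z ∧ ∀ H : 𝔞, ⁅(H : 𝔤), Z⁆ = 0}
  add_mem' := fun {a b} ha hb =>
    ⟨by rw [map_add, ha.1, hb.1], fun H => by rw [lie_add, ha.2 H, hb.2 H, add_zero]⟩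
  zero_mem' := ⟨σ.map_zero, fun H => lie_zero _⟩
  smul_mem' := fun t X hX =>
    ⟨by rw [map_smul, hX.1], fun H => by rw [lie_smul, hX.2 H, smul_zero]⟩

open LinearMap (BilinForm)

namespace LinearMap.BilinForm

variable {K V : Type*} [Field K] [AddCommGroup V] [Module K V] [FiniteDimensional K V]

theorem eq_of_le_of_orthogonal_inf_eq_bot {B : BilinForm K V} (hB : B.IsRefl)
    (hB₀ : ∀ x, B x x = 0 → x = 0) {W E : Submodule K V} (hWE : W ≤ E)
    (h : B.orthogonal W ⊓ E = ⊥) : W = E := by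
  have hcompl : IsCompl W (B.orthogonal W) :=
    (isCompl_orthogonal_iff_disjoint hB).mpr <| Submodule.disjoint_def.mpr
      fun x hxW hxW_perp => hB₀ x (hxW_perp x hxW)
  refine le_antisymm hWE fun y hy => ?_
  obtain ⟨w, hw, z, hz, rfl⟩ :=
    Submodule.mem_sup.mp (hcompl.sup_eq_top ▸ Submodule.mem_top : y ∈ W ⊔ B.orthogonal W)
  have hz0 : z = 0 := (Submodule.eq_bot_iff _).mp h z
    ⟨hz, by simpa using E.sub_mem hy (hWE hw)⟩
  simpa [hz0] using hw

end LinearMap.BilinForm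

namespace Submodule

variable {K V : Type*} [Field K] [AddCommGroup V] [Module K V]

theorem span_singleton_inf_eq_bot_of_le_ker {f : V →ₗ[K] K} {x : V} (hx : f x ≠ 0)
    {M : Submodule K V} (hM : M ≤ LinearMap.ker f) : K ∙ x ⊓ M = ⊥ :=
  (disjoint_span_singleton_of_notMem fun hxM => hx (hM hxM)).symm.eq_bot

theorem eq_inf_ker_of_span_singleton_sup_eq {f : V →ₗ[K] K} {x : V} (hx : f x ≠ 0)
    {M E : Submodule K V} (hM : M ≤ LinearMap.ker f) (hE : K ∙ x ⊔ M = E) :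
    M = E ⊓ LinearMap.ker f := by
  refine le_antisymm (le_inf (hE ▸ le_sup_right) hM) fun y ⟨hyE, hyf⟩ => ?_
  obtain ⟨_, hu, m, hm, rfl⟩ := mem_sup.mp (hE ▸ hyE : y ∈ K ∙ x ⊔ M)
  obtain ⟨t, rfl⟩ := mem_span_singleton.mp hu
  have ht : t = 0 := by
    simpa [LinearMap.mem_ker.mp (hM hm), hx] using LinearMap.mem_ker.mp hyf
  simpa [ht] using hm

end Submodule

section CartanInvolution

variable {𝔤 : Type*} [LieRing 𝔤] [LieAlgebra ℝ 𝔤]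

structure IsCartanInvolution (σ : 𝔤 →ₗ⁅ℝ⁆ 𝔤) : Prop where
  involutive : ∀ X, σ (σ X) = X
  neg_killingForm_pos : ∀ X, X ≠ 0 → 0 < -(killingForm ℝ 𝔤 X (σ X))

/-- The inner product `β_σ(X, Y) = -β(X, σ Y)`. -/
noncomputable def cartanForm (σ : 𝔤 →ₗ⁅ℝ⁆ 𝔤) : BilinForm ℝ 𝔤 :=
  -(killingForm ℝ 𝔤).compl₂ (σ : 𝔤 →ₗ[ℝ] 𝔤)

@[simp]
theorem cartanForm_apply (σ : 𝔤 →ₗ⁅ℝ⁆ 𝔤) (X Y : 𝔤) :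
    cartanForm σ X Y = -(killingForm ℝ 𝔤 X (σ Y)) :=
  rfl

namespace IsCartanInvolution

variable {σ : 𝔤 →ₗ⁅ℝ⁆ 𝔤} (hσ : IsCartanInvolution σ)
include hσ

theorem killingForm_map_map (X Y : 𝔤) : killingForm ℝ 𝔤 (σ X) (σ Y) = killingForm ℝ 𝔤 X Y :=
  LieAlgebra.killingForm_of_equiv_apply
    (⟨σ, σ, hσ.involutive, hσ.involutive⟩ : 𝔤 ≃ₗ⁅ℝ⁆ 𝔤) X Y

theorem killingForm_map_left (X Y : 𝔤) :
    killingForm ℝ 𝔤 (σ X) Y = killingForm ℝ 𝔤 X (σ Y) := by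
  rw [← hσ.killingForm_map_map, hσ.involutive]

theorem map_lie_map (X : 𝔤) : σ ⁅X, σ X⁆ = -⁅X, σ X⁆ := by
  rw [LieHom.map_lie, hσ.involutive, ← lie_skew]

theorem killingForm_map_self_nonpos (X : 𝔤) : killingForm ℝ 𝔤 X (σ X) ≤ 0 := by
  rcases eq_or_ne X 0 with rfl | hX
  · simp
  · linarith [hσ.neg_killingForm_pos X hX]

theorem killingForm_eq_zero_of_map_eq_self_of_map_eq_neg {K P : 𝔤} (hK : σ K = K)
    (hP : σ P = -P) : killingForm ℝ 𝔤 K P = 0 := by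
  have h := hσ.killingForm_map_map K P
  rw [hK, hP, map_neg] at h
  linarith

theorem killingForm_self_pos_of_map_eq_neg {P : 𝔤} (hP : σ P = -P) (hP₀ : P ≠ 0) :
    0 < killingForm ℝ 𝔤 P P := by
  simpa [hP] using hσ.neg_killingForm_pos P hP₀

theorem eq_zero_of_killingForm_map_eq_zero {X : 𝔤} (h : killingForm ℝ 𝔤 X (σ X) = 0) :
    X = 0 := by
  by_contra hX
  simpa [h] using hσ.neg_killingForm_pos X hX

theorem cartanForm_isRefl : (cartanForm σ).IsRefl := by
  intro X Y h
  rw [cartanForm_apply, ← hσ.killingForm_map_left, LieModule.traceForm_comm] at h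
  simpa using h

end IsCartanInvolution

end CartanInvolution

section RestrictedRootSpace

variable {𝔤 : Type} [LieRing 𝔤] [LieAlgebra ℝ 𝔤] {𝔞 : LieSubalgebra ℝ 𝔤}
  {σ : 𝔤 →ₗ⁅ℝ⁆ 𝔤} {lam mu : Module.Dual ℝ 𝔞} {X Y : 𝔤}

theorem mem_rootSpace'_zero_iff : X ∈ rootSpace' 𝔞 0 ↔ ∀ H : 𝔞, ⁅(H : 𝔤), X⁆ = 0 :=
  forall_congr' fun H => by rw [LinearMap.zero_apply, zero_smul]

theorem lie_mem_rootSpace'_add (hX : X ∈ rootSpace' 𝔞 lam) (hY : Y ∈ rootSpace' 𝔞 mu) :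
    ⁅X, Y⁆ ∈ rootSpace' 𝔞 (lam + mu) := fun H => by
  rw [leibniz_lie, hX H, hY H, smul_lie, lie_smul, LinearMap.add_apply, add_smul]

theorem mSub_le_rootSpace'_zero : mSub σ 𝔞 ≤ rootSpace' 𝔞 0 :=
  fun _ hZ => mem_rootSpace'_zero_iff.mpr hZ.2

theorem map_mem_rootSpace'_neg (h𝔞p : ∀ H ∈ 𝔞, σ H = -H) (hX : X ∈ rootSpace' 𝔞 lam) :
    σ X ∈ rootSpace' 𝔞 (-lam) := fun H => by
  have h := congrArg σ (hX H)
  rw [LieHom.map_lie, h𝔞p H H.2, neg_lie, map_smul] at h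
  rw [LinearMap.neg_apply, neg_smul, ← h, neg_neg]

theorem mem_of_mem_rootSpace'_zero_of_map_eq_neg
    (h𝔞ab : ∀ X Y : 𝔤, X ∈ 𝔞 → Y ∈ 𝔞 → ⁅X, Y⁆ = 0) (h𝔞p : ∀ X ∈ 𝔞, σ X = -X)
    (h𝔞max : ∀ 𝔟 : LieSubalgebra ℝ 𝔤, (∀ X Y : 𝔤, X ∈ 𝔟 → Y ∈ 𝔟 → ⁅X, Y⁆ = 0) →
      (∀ X ∈ 𝔟, σ X = -X) → 𝔞 ≤ 𝔟 → 𝔟 = 𝔞)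
    {W : 𝔤} (hW : W ∈ rootSpace' 𝔞 0) (hσW : σ W = -W) : W ∈ 𝔞 := by
  have hmem : ∀ x ∈ 𝔞.toSubmodule ⊔ ℝ ∙ W, ∃ a ∈ 𝔞, ∃ t : ℝ, x = a + t • W := by
    intro x hx
    obtain ⟨a, ha, _, hw, rfl⟩ := Submodule.mem_sup.mp hx
    obtain ⟨t, rfl⟩ := Submodule.mem_span_singleton.mp hw
    exact ⟨a, ha, t, rfl⟩
  have hab : ∀ x y : 𝔤, x ∈ 𝔞.toSubmodule ⊔ ℝ ∙ W → y ∈ 𝔞.toSubmodule ⊔ ℝ ∙ W →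
      ⁅x, y⁆ = 0 := by
    intro x y hx hy
    obtain ⟨a, ha, t, rfl⟩ := hmem x hx
    obtain ⟨b, hb, s, rfl⟩ := hmem y hy
    have haW : ⁅a, W⁆ = 0 := mem_rootSpace'_zero_iff.mp hW ⟨a, ha⟩
    have hWb : ⁅W, b⁆ = 0 := by rw [← lie_skew, mem_rootSpace'_zero_iff.mp hW ⟨b, hb⟩, neg_zero]
    simp [h𝔞ab a b ha hb, haW, hWb]
  let 𝔟 : LieSubalgebra ℝ 𝔤 :=
    { 𝔞.toSubmodule ⊔ ℝ ∙ W with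
      lie_mem' := fun hx hy => by rw [hab _ _ hx hy]; exact Submodule.zero_mem _ }
  have h𝔟p : ∀ x ∈ 𝔟, σ x = -x := by
    intro x hx
    obtain ⟨a, ha, t, rfl⟩ := hmem x hx
    rw [map_add, map_smul, hσW, h𝔞p a ha]
    module
  have h𝔟 : 𝔟 = 𝔞 := h𝔞max 𝔟 hab h𝔟p fun x hx => Submodule.mem_sup_left hx
  exact h𝔟 ▸ Submodule.mem_sup_right (Submodule.mem_span_singleton_self W)

theorem killingForm_lie_apply_of_mem_rootSpace' (hY : Y ∈ rootSpace' 𝔞 mu) (Z : 𝔤) (H : 𝔞) :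
    killingForm ℝ 𝔤 ⁅Z, Y⁆ H = -(mu H * killingForm ℝ 𝔤 Z Y) := by
  rw [LieModule.traceForm_apply_lie_apply, ← lie_skew, hY H, map_neg, map_smul, smul_eq_mul]

/-- The `𝔭`-part of `T` lies in `𝔞` and is therefore `β`-orthogonal to itself. -/
theorem map_eq_self_of_forall_killingForm_eq_zero (hσ : IsCartanInvolution σ)
    (h𝔞p : ∀ H ∈ 𝔞, σ H = -H) (h𝔞c : ∀ W ∈ rootSpace' 𝔞 0, σ W = -W → W ∈ 𝔞) {T : 𝔤}
    (hT : T ∈ rootSpace' 𝔞 0) (hT𝔞 : ∀ H : 𝔞, killingForm ℝ 𝔤 T H = 0) : σ T = T := by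
  set P : 𝔤 := (2⁻¹ : ℝ) • (T - σ T)
  have hσP : σ P = -P := by
    simp only [P, map_smul, map_sub, hσ.involutive]
    module
  have hσTP : σ (T - P) = T - P := by
    rw [map_sub, hσP]
    simp only [P]
    module
  have hP : P ∈ rootSpace' 𝔞 0 :=
    Submodule.smul_mem _ _ <|
      Submodule.sub_mem _ hT (by simpa using map_mem_rootSpace'_neg h𝔞p hT)
  have hPP : killingForm ℝ 𝔤 P P = 0 := by
    have h := hσ.killingForm_eq_zero_of_map_eq_self_of_map_eq_neg hσTP hσP
    rwa [map_sub, LinearMap.sub_apply, hT𝔞 ⟨P, h𝔞c P hP hσP⟩, zero_sub, neg_eq_zero] at h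
  have hP0 : P = 0 := by
    by_contra hP0
    exact (hσ.killingForm_self_pos_of_map_eq_neg hσP hP0).ne' hPP
  have hTσT : T - σ T = 0 := by simpa [P] using hP0
  exact (sub_eq_zero.mp hTσT).symm

theorem lie_map_mem (hσ : IsCartanInvolution σ) (h𝔞p : ∀ H ∈ 𝔞, σ H = -H)
    (h𝔞c : ∀ W ∈ rootSpace' 𝔞 0, σ W = -W → W ∈ 𝔞) (hX : X ∈ rootSpace' 𝔞 lam) :
    ⁅X, σ X⁆ ∈ 𝔞 :=
  h𝔞c _ (by simpa using lie_mem_rootSpace'_add hX (map_mem_rootSpace'_neg h𝔞p hX))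
    (hσ.map_lie_map X)

theorem apply_lie_map_neg (hσ : IsCartanInvolution σ) (h𝔞p : ∀ H ∈ 𝔞, σ H = -H)
    (hlam : lam ≠ 0) (hX : X ∈ rootSpace' 𝔞 lam) (hX0 : X ≠ 0) (hS : ⁅X, σ X⁆ ∈ 𝔞) :
    lam ⟨⁅X, σ X⁆, hS⟩ < 0 := by
  have hXX : killingForm ℝ 𝔤 X (σ X) < 0 := by linarith [hσ.neg_killingForm_pos X hX0]
  have hS𝔞 (H : 𝔞) : killingForm ℝ 𝔤 ⁅X, σ X⁆ H = lam H * killingForm ℝ 𝔤 X (σ X) := by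
    simp [killingForm_lie_apply_of_mem_rootSpace' (map_mem_rootSpace'_neg h𝔞p hX)]
  by_contra! hnonneg
  have hS0 : ⁅X, σ X⁆ = 0 := by
    by_contra hS0
    have hpos := hσ.killingForm_self_pos_of_map_eq_neg (hσ.map_lie_map X) hS0
    have := hS𝔞 ⟨_, hS⟩
    nlinarith
  refine hlam (LinearMap.ext fun H => ?_)
  have h := hS𝔞 H
  rw [hS0, map_zero, LinearMap.zero_apply, eq_comm, mul_eq_zero] at h
  exact h.resolve_right hXX.ne

theorem lie_map_mem_mSub (hσ : IsCartanInvolution σ) (h𝔞p : ∀ H ∈ 𝔞, σ H = -H)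
    (h𝔞c : ∀ W ∈ rootSpace' 𝔞 0, σ W = -W → W ∈ 𝔞) (hX : X ∈ rootSpace' 𝔞 lam)
    (hY : Y ∈ rootSpace' 𝔞 lam) (hXY : cartanForm σ X Y = 0) : ⁅σ X, Y⁆ ∈ mSub σ 𝔞 := by
  have hT : ⁅σ X, Y⁆ ∈ rootSpace' 𝔞 0 := by
    simpa using lie_mem_rootSpace'_add (map_mem_rootSpace'_neg h𝔞p hX) hY
  refine ⟨map_eq_self_of_forall_killingForm_eq_zero hσ h𝔞p h𝔞c hT fun H => ?_,
    mem_rootSpace'_zero_iff.mp hT⟩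
  rw [cartanForm_apply, neg_eq_zero] at hXY
  rw [killingForm_lie_apply_of_mem_rootSpace' hY, hσ.killingForm_map_left, hXY, mul_zero,
    neg_zero]

theorem eq_zero_of_cartanForm_eq_zero (hσ : IsCartanInvolution σ)
    (h𝔞p : ∀ H ∈ 𝔞, σ H = -H) (h𝔞c : ∀ W ∈ rootSpace' 𝔞 0, σ W = -W → W ∈ 𝔞)
    (hlam : lam ≠ 0) (hX : X ∈ rootSpace' 𝔞 lam) (hX0 : X ≠ 0) (hY : Y ∈ rootSpace' 𝔞 lam)
    (hXY : cartanForm σ X Y = 0) (hmY : ∀ Z ∈ mSub σ 𝔞, cartanForm σ ⁅Z, X⁆ Y = 0) :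
    Y = 0 := by
  have hT : ⁅σ X, Y⁆ = 0 := by
    refine hσ.eq_zero_of_killingForm_map_eq_zero ?_
    have h := hmY _ (lie_map_mem_mSub hσ h𝔞p h𝔞c hX hY hXY)
    rwa [cartanForm_apply, neg_eq_zero, LieModule.traceForm_apply_lie_apply,
      ← hσ.involutive X, ← LieHom.map_lie, hσ.involutive] at h
  have hS := lie_map_mem hσ h𝔞p h𝔞c hX
  have hSY : lam ⟨_, hS⟩ • Y = -⁅σ X, ⁅X, Y⁆⁆ := by
    rw [← hY ⟨_, hS⟩, lie_lie, hT, lie_zero, zero_sub]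
  have hYU : lam ⟨_, hS⟩ * killingForm ℝ 𝔤 Y (σ Y) =
      killingForm ℝ 𝔤 ⁅X, Y⁆ (σ ⁅X, Y⁆) := by
    rw [← smul_eq_mul, ← LinearMap.smul_apply, ← map_smul, hSY, ← lie_skew, neg_neg,
      LieModule.traceForm_apply_lie_apply, LieHom.map_lie]
  by_contra hY0
  have hYY : killingForm ℝ 𝔤 Y (σ Y) < 0 := by linarith [hσ.neg_killingForm_pos Y hY0]
  have hlS := apply_lie_map_neg hσ h𝔞p hlam hX hX0 hS
  nlinarith [hσ.killingForm_map_self_nonpos ⁅X, Y⁆]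

theorem span_lie_mSub_le_rootSpace' (hX : X ∈ rootSpace' 𝔞 lam) :
    Submodule.span ℝ {Y : 𝔤 | ∃ Z ∈ mSub σ 𝔞, Y = ⁅Z, X⁆} ≤ rootSpace' 𝔞 lam := by
  rw [Submodule.span_le]
  rintro _ ⟨Z, hZ, rfl⟩
  simpa using lie_mem_rootSpace'_add (mSub_le_rootSpace'_zero hZ) hX

theorem span_lie_mSub_le_ker_cartanForm (hσ : IsCartanInvolution σ) (X : 𝔤) :
    Submodule.span ℝ {Y : 𝔤 | ∃ Z ∈ mSub σ 𝔞, Y = ⁅Z, X⁆} ≤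
      LinearMap.ker (cartanForm σ X) := by
  rw [Submodule.span_le]
  rintro _ ⟨Z, hZ, rfl⟩
  have h := hσ.killingForm_eq_zero_of_map_eq_self_of_map_eq_neg hZ.1 (hσ.map_lie_map X)
  rw [SetLike.mem_coe, LinearMap.mem_ker, cartanForm_apply, neg_eq_zero, LieHom.map_lie, hZ.1,
    ← LieModule.traceForm_apply_lie_apply, ← lie_skew, map_neg, LinearMap.neg_apply,
    LieModule.traceForm_apply_lie_apply, h, neg_zero]

end RestrictedRootSpace

theorem statement0_general
    (𝔤 : Type) [LieRing 𝔤] [LieAlgebra ℝ 𝔤] [Module.Finite ℝ 𝔤]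
    -- `σ` is a Cartan involution of `𝔤`:
    (σ : 𝔤 →ₗ⁅ℝ⁆ 𝔤) (hσinv : ∀ X, σ (σ X) = X)
    (hσpos : ∀ X : 𝔤, X ≠ 0 → 0 < -(killingForm ℝ 𝔤 X (σ X)))
    -- `𝔞` is a maximal abelian subalgebra contained in `𝔭 = {X : σ X = -X}`:
    (𝔞 : LieSubalgebra ℝ 𝔤)
    (h𝔞ab : ∀ X Y : 𝔤, X ∈ 𝔞 → Y ∈ 𝔞 → ⁅X, Y⁆ = 0)
    (h𝔞p : ∀ X ∈ 𝔞, σ X = -X)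
    (h𝔞max : ∀ 𝔟 : LieSubalgebra ℝ 𝔤, (∀ X Y : 𝔤, X ∈ 𝔟 → Y ∈ 𝔟 → ⁅X, Y⁆ = 0) →
      (∀ X ∈ 𝔟, σ X = -X) → 𝔞 ≤ 𝔟 → 𝔟 = 𝔞)
    -- `λ` is a restricted root and `X ∈ 𝔤_λ` is nonzero:
    (lam : Module.Dual ℝ 𝔞) (hlam : lam ≠ 0)
    (X : 𝔤) (hX : X ∈ rootSpace' 𝔞 lam) (hX0 : X ≠ 0) :
    -- the span of `[𝔪, X]` is the `β_σ`-orthogonal complement of `X` in `𝔤_λ` …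
    (Submodule.span ℝ {Y : 𝔤 | ∃ Z ∈ mSub σ 𝔞, Y = ⁅Z, X⁆} : Set 𝔤)
        = {Y : 𝔤 | Y ∈ rootSpace' 𝔞 lam ∧ -(killingForm ℝ 𝔤 X (σ Y)) = 0} ∧
    -- … and `𝔤_λ = ℝ·X ⊕ [𝔪, X]`:
    Submodule.span ℝ {X} ⊓ Submodule.span ℝ {Y : 𝔤 | ∃ Z ∈ mSub σ 𝔞, Y = ⁅Z, X⁆} = ⊥ ∧
    Submodule.span ℝ {X} ⊔ Submodule.span ℝ {Y : 𝔤 | ∃ Z ∈ mSub σ 𝔞, Y = ⁅Z, X⁆}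
        = rootSpace' 𝔞 lam := by
  have hσ : IsCartanInvolution σ := ⟨hσinv, hσpos⟩
  have h𝔞c : ∀ W ∈ rootSpace' 𝔞 0, σ W = -W → W ∈ 𝔞 :=
    fun _ => mem_of_mem_rootSpace'_zero_of_map_eq_neg h𝔞ab h𝔞p h𝔞max
  have hXX : cartanForm σ X X ≠ 0 := (hσpos X hX0).ne'
  set M := Submodule.span ℝ {Y : 𝔤 | ∃ Z ∈ mSub σ 𝔞, Y = ⁅Z, X⁆}
  have hker : M ≤ LinearMap.ker (cartanForm σ X) := span_lie_mSub_le_ker_cartanForm hσ X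
  have hsup : ℝ ∙ X ⊔ M = rootSpace' 𝔞 lam := by
    refine (cartanForm σ).eq_of_le_of_orthogonal_inf_eq_bot hσ.cartanForm_isRefl
      (fun Y hY => hσ.eq_zero_of_killingForm_map_eq_zero (neg_eq_zero.mp hY))
      (sup_le ((Submodule.span_singleton_le_iff_mem _ _).mpr hX)
        (span_lie_mSub_le_rootSpace' hX)) ((Submodule.eq_bot_iff _).mpr ?_)
    rintro Y ⟨hYperp, hY⟩
    refine eq_zero_of_cartanForm_eq_zero hσ h𝔞p h𝔞c hlam hX hX0 hY
      (hYperp X (Submodule.mem_sup_left (Submodule.mem_span_singleton_self X)))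
      fun Z hZ => hYperp _ (Submodule.mem_sup_right (Submodule.subset_span ⟨Z, hZ, rfl⟩))
  refine ⟨?_, Submodule.span_singleton_inf_eq_bot_of_le_ker hXX hker, hsup⟩
  rw [Submodule.eq_inf_ker_of_span_singleton_sup_eq hXX hker hsup]
  rfl

/-- For every restricted root `λ ∈ Σ` and every nonzero `X ∈ 𝔤_λ`, the linear
span of `[𝔪, X] = {[Z, X] : Z ∈ 𝔪}` equals the `β_σ`-orthogonal complement of `X` inside `𝔤_λ`,
and `𝔤_λ = ℝ·X ⊕ [𝔪, X]`. -/
theorem statement0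
    (𝔤 : Type) [LieRing 𝔤] [LieAlgebra ℝ 𝔤] [Module.Finite ℝ 𝔤]
    [LieAlgebra.IsSemisimple ℝ 𝔤]
    -- `σ` is a Cartan involution of `𝔤`:
    (σ : 𝔤 →ₗ⁅ℝ⁆ 𝔤) (hσinv : ∀ X, σ (σ X) = X)
    (hσpos : ∀ X : 𝔤, X ≠ 0 → 0 < -(killingForm ℝ 𝔤 X (σ X)))
    -- `𝔞` is a maximal abelian subalgebra contained in `𝔭 = {X : σ X = -X}`:
    (𝔞 : LieSubalgebra ℝ 𝔤)
    (h𝔞ab : ∀ X Y : 𝔤, X ∈ 𝔞 → Y ∈ 𝔞 → ⁅X, Y⁆ = 0)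
    (h𝔞p : ∀ X ∈ 𝔞, σ X = -X)
    (h𝔞max : ∀ 𝔟 : LieSubalgebra ℝ 𝔤, (∀ X Y : 𝔤, X ∈ 𝔟 → Y ∈ 𝔟 → ⁅X, Y⁆ = 0) →
      (∀ X ∈ 𝔟, σ X = -X) → 𝔞 ≤ 𝔟 → 𝔟 = 𝔞)
    -- `λ` is a restricted root and `X ∈ 𝔤_λ` is nonzero:
    (lam : Module.Dual ℝ 𝔞) (hlam : lam ≠ 0)
    (X : 𝔤) (hX : X ∈ rootSpace' 𝔞 lam) (hX0 : X ≠ 0) :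
    -- the span of `[𝔪, X]` is the `β_σ`-orthogonal complement of `X` in `𝔤_λ` …
    (Submodule.span ℝ {Y : 𝔤 | ∃ Z ∈ mSub σ 𝔞, Y = ⁅Z, X⁆} : Set 𝔤)
        = {Y : 𝔤 | Y ∈ rootSpace' 𝔞 lam ∧ -(killingForm ℝ 𝔤 X (σ Y)) = 0} ∧
    -- … and `𝔤_λ = ℝ·X ⊕ [𝔪, X]`:
    Submodule.span ℝ {X} ⊓ Submodule.span ℝ {Y : 𝔤 | ∃ Z ∈ mSub σ 𝔞, Y = ⁅Z, X⁆} = ⊥ ∧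
    Submodule.span ℝ {X} ⊔ Submodule.span ℝ {Y : 𝔤 | ∃ Z ∈ mSub σ 𝔞, Y = ⁅Z, X⁆}
        = rootSpace' 𝔞 lam :=
  statement0_general 𝔤 σ hσinv hσpos 𝔞 h𝔞ab h𝔞p h𝔞max lam hlam X hX hX0
end

section
/- A Chevalley–Eilenberg 2-cocycle c : 𝔰 × 𝔰 → ℂ (for the trivial representation of 𝔰 on ℂ) is a Chevalley–Eilenberg 2-coboundary if and only if c vanishes on 𝔞 × 𝔞, i.e. c(H, H') = 0 for all H, H' ∈ 𝔞. -/
/-- The set of positive restricted roots, with respect to a basis `φ` of `𝔞*` and the map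
`λ ↦ H_λ` determined by the Killing form. -/
def posRootSet {𝔤 : Type} [LieRing 𝔤] [LieAlgebra ℝ 𝔤] {r : ℕ}
    (𝔞 : LieSubalgebra ℝ 𝔤) (φ : Module.Basis (Fin r) ℝ (Module.Dual ℝ 𝔞))
    (Hv : Module.Dual ℝ 𝔞 → 𝔞) : Set (Module.Dual ℝ 𝔞) :=
  {lam | lam ≠ 0 ∧ rootSpace' 𝔞 lam ≠ ⊥ ∧
    ∃ k : Fin r, 0 < φ k (Hv lam) ∧ ∀ j : Fin r, j < k → φ j (Hv lam) = 0}

/-- The subspace `𝔫 = ⊕_{λ ∈ Σ⁺} 𝔤_λ`. -/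
def nSub {𝔤 : Type} [LieRing 𝔤] [LieAlgebra ℝ 𝔤] {r : ℕ}
    (𝔞 : LieSubalgebra ℝ 𝔤) (φ : Module.Basis (Fin r) ℝ (Module.Dual ℝ 𝔞))
    (Hv : Module.Dual ℝ 𝔞 → 𝔞) : Submodule ℝ 𝔤 :=
  ⨆ lam ∈ posRootSet 𝔞 φ Hv, rootSpace' 𝔞 lam

open Module.End LieAlgebra Filter Topology

section Lattice

variable {ι α : Type*} [CompleteLattice α] {f : ι → α} {A : α} {i₀ : ι} {p : ι → Prop}

lemma iSupIndep.eq_bot_of_sup_iSup_eq_top (hf : iSupIndep f) (hA : A ≤ f i₀)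
    (htop : A ⊔ ⨆ (i) (_ : p i), f i = ⊤) {j : ι} (hj₀ : j ≠ i₀) (hj : ¬ p j) : f j = ⊥ := by
  refine (hf j).eq_bot_of_le (le_top.trans_eq htop.symm |>.trans (sup_le ?_ ?_))
  · exact hA.trans (le_iSup₂_of_le i₀ hj₀.symm le_rfl)
  · exact iSup₂_mono' fun i hi => ⟨i, fun (hij : i = j) => hj (hij ▸ hi), le_rfl⟩

lemma iSupIndep.eq_of_sup_iSup_eq_top [IsModularLattice α] (hf : iSupIndep f) (hA : A ≤ f i₀)
    (htop : A ⊔ ⨆ (i) (_ : p i), f i = ⊤) (hi₀ : ¬ p i₀) : f i₀ = A := by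
  have hdisj : Disjoint (⨆ (i) (_ : p i), f i) (f i₀) :=
    ((hf i₀).mono_right <|
      iSup₂_mono' fun i hi => ⟨i, fun (h : i = i₀) => hi₀ (h ▸ hi), le_rfl⟩).symm
  calc f i₀ = (A ⊔ ⨆ (i) (_ : p i), f i) ⊓ f i₀ := by rw [htop, top_inf_eq]
    _ = A := by rw [sup_inf_assoc_of_le _ hA, hdisj.eq_bot, sup_bot_eq]

end Lattice

section Cohomology

variable {K L M : Type*} [Field K] [LieRing L] [LieAlgebra K L] [AddCommGroup M] [Module K M]
  {c : L →ₗ[K] L →ₗ[K] M}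

lemma add_smul_apply_eq_apply_lie_of_mem_eigenspace (hanti : ∀ X Y, c X Y = - c Y X)
    (hcocycle : ∀ X Y Z, c ⁅X, Y⁆ Z + c ⁅Y, Z⁆ X + c ⁅Z, X⁆ Y = 0) {H₀ X Y : L} {s t : K}
    (hX : X ∈ eigenspace (ad K L H₀) s) (hY : Y ∈ eigenspace (ad K L H₀) t) :
    (s + t) • c X Y = c H₀ ⁅X, Y⁆ := by
  rw [mem_eigenspace_iff, ad_apply] at hX hY
  have h := hcocycle H₀ X Y
  rw [hX, ← lie_skew Y H₀, hY, map_neg, map_smul, map_smul, LinearMap.neg_apply,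
    LinearMap.smul_apply, LinearMap.smul_apply, hanti Y X, hanti ⁅X, Y⁆ H₀] at h
  rw [add_smul]
  linear_combination (norm := module) h

lemma lie_mem_eigenspace_ad_add {H₀ X Y : L} {s t : K}
    (hX : X ∈ eigenspace (ad K L H₀) s) (hY : Y ∈ eigenspace (ad K L H₀) t) :
    ⁅X, Y⁆ ∈ eigenspace (ad K L H₀) (s + t) := by
  rw [mem_eigenspace_iff, ad_apply] at hX hY ⊢
  rw [leibniz_lie, hX, hY, smul_lie, lie_smul, add_smul]

theorem exists_eq_lie_of_iSup_eigenspace_eq_top (hanti : ∀ X Y, c X Y = - c Y X)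
    (hcocycle : ∀ X Y Z, c ⁅X, Y⁆ Z + c ⁅Y, Z⁆ X + c ⁅Z, X⁆ Y = 0) (H₀ : L)
    (htop : ⨆ t, eigenspace (ad K L H₀) t = ⊤)
    (hopp : ∀ s X Y, X ∈ eigenspace (ad K L H₀) s → Y ∈ eigenspace (ad K L H₀) (-s) →
      c X Y = 0) :
    ∃ α : L →ₗ[K] M, ∀ X Y, c X Y = α ⁅X, Y⁆ := by
  classical
  set E := fun t => eigenspace (ad K L H₀) t
  have hE : DirectSum.IsInternal E :=
    DirectSum.isInternal_submodule_of_iSupIndep_of_iSup_eq_top (eigenspaces_iSupIndep _) htop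
  -- on `E t` the primitive is `t⁻¹ • c H₀`; since `0⁻¹ = 0` it vanishes on `E 0`
  let α : L →ₗ[K] M := (DirectSum.toModule K K M fun t => t⁻¹ • (c H₀).comp (E t).subtype) ∘ₗ
    (LinearEquiv.ofBijective (DirectSum.coeLinearMap E) hE).symm.toLinearMap
  have hα : ∀ t, ∀ x ∈ E t, α x = t⁻¹ • c H₀ x := by
    intro t x hx
    have hx' : (LinearEquiv.ofBijective (DirectSum.coeLinearMap E) hE).symm x =
        DirectSum.lof K K (fun t => E t) t ⟨x, hx⟩ :=
      (LinearEquiv.symm_apply_eq _).2 (DirectSum.coeLinearMap_lof E t ⟨x, hx⟩).symm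
    simp [α, hx']
  have heig : ∀ s t, ∀ X ∈ E s, ∀ Y ∈ E t, c X Y = α ⁅X, Y⁆ := by
    intro s t X hX Y hY
    rw [hα _ _ (lie_mem_eigenspace_ad_add hX hY),
      ← add_smul_apply_eq_apply_lie_of_mem_eigenspace hanti hcocycle hX hY, smul_smul]
    rcases eq_or_ne (s + t) 0 with hst | hst
    · rw [eq_neg_of_add_eq_zero_right hst] at hY
      rw [hst, inv_zero, zero_mul, zero_smul, hopp s X Y hX hY]
    · rw [inv_mul_cancel₀ hst, one_smul]
  refine ⟨α, fun X Y => ?_⟩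
  suffices c = (ad K L : L →ₗ[K] Module.End K L).compr₂ α by rw [this]; rfl
  have hspan : Submodule.span K (⋃ t, (E t : Set L)) = ⊤ := by
    rw [← Submodule.iSup_eq_span, htop]
  refine LinearMap.ext_on hspan fun X hX => LinearMap.ext_on hspan fun Y hY => ?_
  obtain ⟨s, hX⟩ := Set.mem_iUnion.1 hX
  obtain ⟨t, hY⟩ := Set.mem_iUnion.1 hY
  exact heig s t X hX Y hY

theorem exists_eq_lie_of_sup_iSup_pos_eigenspace_eq_top [LinearOrder K] [IsStrictOrderedRing K]
    (hanti : ∀ X Y, c X Y = - c Y X)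
    (hcocycle : ∀ X Y Z, c ⁅X, Y⁆ Z + c ⁅Y, Z⁆ X + c ⁅Z, X⁆ Y = 0) (H₀ : L) {A : Submodule K L}
    (hA : A ≤ eigenspace (ad K L H₀) 0) (htop : A ⊔ ⨆ t > 0, eigenspace (ad K L H₀) t = ⊤)
    (hcA : ∀ X ∈ A, ∀ Y ∈ A, c X Y = 0) :
    ∃ α : L →ₗ[K] M, ∀ X Y, c X Y = α ⁅X, Y⁆ := by
  have hE := eigenspaces_iSupIndep (ad K L H₀)
  have hneg : ∀ t < 0, eigenspace (ad K L H₀) t = ⊥ := fun t ht =>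
    hE.eq_bot_of_sup_iSup_eq_top hA htop ht.ne ht.not_gt
  have hzero : eigenspace (ad K L H₀) 0 = A := hE.eq_of_sup_iSup_eq_top hA htop (lt_irrefl 0)
  refine exists_eq_lie_of_iSup_eigenspace_eq_top hanti hcocycle H₀ ?_ fun s X Y hX hY => ?_
  · refine eq_top_iff.2 (htop.symm.le.trans (sup_le ?_ (iSup₂_le fun t _ => le_iSup _ t)))
    exact hA.trans (le_iSup _ 0)
  rcases lt_trichotomy s 0 with hs | rfl | hs
  · rw [hneg s hs, Submodule.mem_bot] at hX
    rw [hX, map_zero, LinearMap.zero_apply]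
  · rw [neg_zero, hzero] at hY
    rw [hzero] at hX
    exact hcA X hX Y hY
  · rw [hneg (-s) (neg_neg_of_pos hs), Submodule.mem_bot] at hY
    rw [hY, map_zero]

end Cohomology

lemma eventually_pos_sum_pow_mul {r : ℕ} {a : Fin r → ℝ} {k₀ : Fin r} (hk₀ : 0 < a k₀)
    (hlt : ∀ j < k₀, a j = 0) : ∀ᶠ ε in 𝓝[>] 0, 0 < ∑ k : Fin r, ε ^ (k : ℕ) * a k := by
  set h : ℝ → ℝ := fun ε => ∑ k : Fin r, ε ^ ((k : ℕ) - k₀) * a k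
  have hsum : ∀ ε, ∑ k : Fin r, ε ^ (k : ℕ) * a k = ε ^ (k₀ : ℕ) * h ε := by
    intro ε
    rw [Finset.mul_sum]
    refine Finset.sum_congr rfl fun k _ => ?_
    rcases lt_or_ge k k₀ with hk | hk
    · simp [hlt k hk]
    · rw [← mul_assoc, ← pow_add, Nat.add_sub_cancel' (Fin.le_def.1 hk)]
  have hh0 : h 0 = a k₀ := by
    refine (Finset.sum_eq_single k₀ (fun k _ hk => ?_) (by simp)).trans (by simp)
    rcases lt_or_gt_of_ne hk with hk | hk
    · rw [hlt k hk, mul_zero]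
    · rw [zero_pow (Nat.sub_ne_zero_of_lt hk), zero_mul]
  have hcont : Continuous h := by fun_prop
  have hev : ∀ᶠ ε in 𝓝 0, 0 < h ε :=
    (hcont.tendsto 0).eventually (lt_mem_nhds (hh0 ▸ hk₀))
  filter_upwards [nhdsWithin_le_nhds hev, self_mem_nhdsWithin] with ε hε hεpos
  rw [hsum]
  exact mul_pos (pow_pos hεpos _) hε

lemma Set.Finite.exists_forall_pos_of_lex_pos {V : Type*} [AddCommGroup V] [Module ℝ V] {r : ℕ}
    (u : Fin r → V) {S : Set (Module.Dual ℝ V)} (hS : S.Finite)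
    (hlex : ∀ lam ∈ S, ∃ k₀, 0 < lam (u k₀) ∧ ∀ j < k₀, lam (u j) = 0) :
    ∃ H, ∀ lam ∈ S, 0 < lam H := by
  have hev : ∀ lam ∈ S, ∀ᶠ ε in 𝓝[>] (0 : ℝ), 0 < lam (∑ k : Fin r, ε ^ (k : ℕ) • u k) := by
    intro lam hlam
    obtain ⟨k₀, hk₀, hlt⟩ := hlex lam hlam
    simp only [map_sum, map_smul, smul_eq_mul]
    exact eventually_pos_sum_pow_mul hk₀ hlt
  obtain ⟨ε, hε⟩ := ((eventually_all_finite hS).2 hev).exists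
  exact ⟨_, hε⟩

section RootSpace

variable {𝔤 : Type} [LieRing 𝔤] [LieAlgebra ℝ 𝔤] (𝔞 : LieSubalgebra ℝ 𝔤) [LieRing.IsNilpotent 𝔞]

lemma rootSpace'_le_genWeightSpace (lam : Module.Dual ℝ 𝔞) :
    rootSpace' 𝔞 lam ≤ (LieModule.genWeightSpace 𝔤 (lam : 𝔞 → ℝ)).toSubmodule := fun _ hx =>
  LieModule.weightSpace_le_genWeightSpace 𝔤 _ ((LieModule.mem_weightSpace _ _).2 hx)

lemma finite_setOf_rootSpace'_ne_bot [Module.Finite ℝ 𝔤] :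
    {lam : Module.Dual ℝ 𝔞 | rootSpace' 𝔞 lam ≠ ⊥}.Finite := by
  refine ((LieModule.finite_genWeightSpace_ne_bot ℝ 𝔞 𝔤).preimage
    LinearMap.coe_injective.injOn).subset fun lam hlam hbot => hlam (eq_bot_iff.2 ?_)
  simpa [hbot] using rootSpace'_le_genWeightSpace 𝔞 lam

lemma exists_forall_posRootSet_pos [Module.Finite ℝ 𝔤] {r : ℕ}
    (φ : Module.Basis (Fin r) ℝ (Module.Dual ℝ 𝔞)) {Hv : Module.Dual ℝ 𝔞 → 𝔞}
    (hHv : ∀ lam (H : 𝔞), killingForm ℝ 𝔤 (Hv lam : 𝔤) (H : 𝔤) = lam H) :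
    ∃ H₀ : 𝔞, ∀ lam ∈ posRootSet 𝔞 φ Hv, 0 < lam H₀ := by
  refine ((finite_setOf_rootSpace'_ne_bot 𝔞).subset fun lam hlam => hlam.2.1)
    |>.exists_forall_pos_of_lex_pos (fun k => Hv (φ k)) ?_
  rintro lam ⟨-, -, k₀, hk₀, hlt⟩
  have hcoord : ∀ k, lam (Hv (φ k)) = φ k (Hv lam) := fun k => by
    rw [← hHv, LieModule.traceForm_comm, hHv]
  exact ⟨k₀, by rwa [hcoord], fun j hj => by rw [hcoord, hlt j hj]⟩

end RootSpace

section Iwasawa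

variable {𝔤 : Type} [LieRing 𝔤] [LieAlgebra ℝ 𝔤] {𝔞 𝔰 : LieSubalgebra ℝ 𝔤} {H₀ : 𝔰}

lemma comap_le_eigenspace_ad_zero [IsLieAbelian 𝔞] (hH₀ : (H₀ : 𝔤) ∈ 𝔞) :
    𝔞.toSubmodule.comap 𝔰.incl.toLinearMap ≤ eigenspace (ad ℝ 𝔰 H₀) 0 := fun x hx => by
  rw [mem_eigenspace_iff, ad_apply, zero_smul]
  exact Subtype.ext (congrArg Subtype.val (trivial_lie_zero 𝔞 𝔞 ⟨_, hH₀⟩ ⟨_, hx⟩) :)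

lemma mem_eigenspace_ad_of_mem_rootSpace' (hH₀ : (H₀ : 𝔤) ∈ 𝔞) {lam : Module.Dual ℝ 𝔞} {x : 𝔰}
    (hx : (x : 𝔤) ∈ rootSpace' 𝔞 lam) : x ∈ eigenspace (ad ℝ 𝔰 H₀) (lam ⟨H₀, hH₀⟩) := by
  rw [mem_eigenspace_iff, ad_apply]
  exact Subtype.ext (hx ⟨H₀, hH₀⟩)

lemma sup_iSup_pos_eigenspace_ad_eq_top {S : Set (Module.Dual ℝ 𝔞)}
    (h𝔰 : 𝔰.toSubmodule = 𝔞.toSubmodule ⊔ ⨆ lam ∈ S, rootSpace' 𝔞 lam) (hH₀ : (H₀ : 𝔤) ∈ 𝔞)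
    (hpos : ∀ lam ∈ S, 0 < lam ⟨H₀, hH₀⟩) :
    𝔞.toSubmodule.comap 𝔰.incl.toLinearMap ⊔ ⨆ t > 0, eigenspace (ad ℝ 𝔰 H₀) t = ⊤ := by
  set A := 𝔞.toSubmodule.comap 𝔰.incl.toLinearMap
  set N := ⨆ t > 0, eigenspace (ad ℝ 𝔰 H₀) t
  have hmem : ∀ {y}, y ∈ 𝔞.toSubmodule ⊔ ⨆ lam ∈ S, rootSpace' 𝔞 lam → y ∈ 𝔰.toSubmodule :=
    fun hy => h𝔰 ▸ hy
  have hle : 𝔞.toSubmodule ⊔ ⨆ lam ∈ S, rootSpace' 𝔞 lam ≤ (A ⊔ N).map 𝔰.incl.toLinearMap := by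
    refine sup_le (fun y hy => ⟨⟨y, hmem (Submodule.mem_sup_left hy)⟩,
      Submodule.mem_sup_left hy, rfl⟩) (iSup₂_le fun lam hlam y hy => ?_)
    have hyS : y ∈ ⨆ lam ∈ S, rootSpace' 𝔞 lam :=
      Submodule.mem_iSup_of_mem lam (Submodule.mem_iSup_of_mem hlam hy)
    refine ⟨⟨y, hmem (Submodule.mem_sup_right hyS)⟩, Submodule.mem_sup_right ?_, rfl⟩
    exact Submodule.mem_iSup_of_mem _ (Submodule.mem_iSup_of_mem (hpos lam hlam)
      (mem_eigenspace_ad_of_mem_rootSpace' hH₀ hy))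
  refine eq_top_iff.2 fun x _ => ?_
  obtain ⟨y, hy, hyx⟩ := hle (by rw [← h𝔰]; exact x.2)
  rwa [← Subtype.ext hyx]

end Iwasawa

theorem statement5_general
    (𝔤 : Type) [LieRing 𝔤] [LieAlgebra ℝ 𝔤] [Module.Finite ℝ 𝔤]
    -- `𝔞` is a maximal abelian subalgebra contained in `𝔭 = {X : σ X = -X}`:
    (𝔞 : LieSubalgebra ℝ 𝔤)
    (h𝔞ab : ∀ X Y : 𝔤, X ∈ 𝔞 → Y ∈ 𝔞 → ⁅X, Y⁆ = 0)
    -- `φ` is a basis of `𝔞*` and `Hv lam = H_λ` is determined by the Killing form: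
    (r : ℕ) (φ : Module.Basis (Fin r) ℝ (Module.Dual ℝ 𝔞))
    (Hv : Module.Dual ℝ 𝔞 → 𝔞)
    (hHv : ∀ (lam : Module.Dual ℝ 𝔞) (H : 𝔞),
      killingForm ℝ 𝔤 (Hv lam : 𝔤) (H : 𝔤) = lam H)
    -- `𝔰` is the Iwasawa subalgebra `𝔞 ⊕ 𝔫`:
    (𝔰 : LieSubalgebra ℝ 𝔤) (h𝔰 : 𝔰.toSubmodule = 𝔞.toSubmodule ⊔ nSub 𝔞 φ Hv)
    -- `c` is a Chevalley–Eilenberg 2-cocycle on `𝔰` with trivial coefficients in `ℂ`: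
    (c : 𝔰 →ₗ[ℝ] 𝔰 →ₗ[ℝ] ℂ)
    (hanti : ∀ X Y : 𝔰, c X Y = - c Y X)
    (hcocycle : ∀ X Y Z : 𝔰, c ⁅X, Y⁆ Z + c ⁅Y, Z⁆ X + c ⁅Z, X⁆ Y = 0) :
    -- `c` is a 2-coboundary iff it vanishes on `𝔞 × 𝔞`:
    (∃ α : 𝔰 →ₗ[ℝ] ℂ, ∀ X Y : 𝔰, c X Y = α ⁅X, Y⁆) ↔
      (∀ H H' : 𝔰, (H : 𝔤) ∈ 𝔞 → (H' : 𝔤) ∈ 𝔞 → c H H' = 0) := by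
  refine ⟨fun ⟨α, hα⟩ H H' hH hH' => ?_, fun hvan => ?_⟩
  · rw [hα, show ⁅H, H'⁆ = 0 from Subtype.ext (h𝔞ab _ _ hH hH'), map_zero]
  have : IsLieAbelian 𝔞 := ⟨fun X Y => Subtype.ext (h𝔞ab X Y X.2 Y.2)⟩
  obtain ⟨H₀, hpos⟩ := exists_forall_posRootSet_pos 𝔞 φ hHv
  have hH₀ : (H₀ : 𝔤) ∈ 𝔰.toSubmodule := h𝔰 ▸ Submodule.mem_sup_left H₀.2
  exact exists_eq_lie_of_sup_iSup_pos_eigenspace_eq_top hanti hcocycle ⟨H₀, hH₀⟩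
    (comap_le_eigenspace_ad_zero H₀.2) (sup_iSup_pos_eigenspace_ad_eq_top h𝔰 H₀.2 hpos)
    fun X hX Y hY => hvan X Y hX hY

/-- A Chevalley–Eilenberg 2-cocycle `c : 𝔰 × 𝔰 → ℂ` (trivial coefficients)
is a 2-coboundary if and only if it vanishes on `𝔞 × 𝔞`. -/
theorem statement5
    (𝔤 : Type) [LieRing 𝔤] [LieAlgebra ℝ 𝔤] [Module.Finite ℝ 𝔤]
    [LieAlgebra.IsSemisimple ℝ 𝔤]
    -- `σ` is a Cartan involution of `𝔤`:
    (σ : 𝔤 →ₗ⁅ℝ⁆ 𝔤) (hσinv : ∀ X, σ (σ X) = X)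
    (hσpos : ∀ X : 𝔤, X ≠ 0 → 0 < -(killingForm ℝ 𝔤 X (σ X)))
    -- `𝔞` is a maximal abelian subalgebra contained in `𝔭 = {X : σ X = -X}`:
    (𝔞 : LieSubalgebra ℝ 𝔤)
    (h𝔞ab : ∀ X Y : 𝔤, X ∈ 𝔞 → Y ∈ 𝔞 → ⁅X, Y⁆ = 0)
    (h𝔞p : ∀ X ∈ 𝔞, σ X = -X)
    (h𝔞max : ∀ 𝔟 : LieSubalgebra ℝ 𝔤, (∀ X Y : 𝔤, X ∈ 𝔟 → Y ∈ 𝔟 → ⁅X, Y⁆ = 0) →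
      (∀ X ∈ 𝔟, σ X = -X) → 𝔞 ≤ 𝔟 → 𝔟 = 𝔞)
    -- `φ` is a basis of `𝔞*` and `Hv lam = H_λ` is determined by the Killing form:
    (r : ℕ) (φ : Module.Basis (Fin r) ℝ (Module.Dual ℝ 𝔞))
    (Hv : Module.Dual ℝ 𝔞 → 𝔞)
    (hHv : ∀ (lam : Module.Dual ℝ 𝔞) (H : 𝔞),
      killingForm ℝ 𝔤 (Hv lam : 𝔤) (H : 𝔤) = lam H)
    -- `𝔰` is the Iwasawa subalgebra `𝔞 ⊕ 𝔫`:
    (𝔰 : LieSubalgebra ℝ 𝔤) (h𝔰 : 𝔰.toSubmodule = 𝔞.toSubmodule ⊔ nSub 𝔞 φ Hv)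
    -- `c` is a Chevalley–Eilenberg 2-cocycle on `𝔰` with trivial coefficients in `ℂ`:
    (c : 𝔰 →ₗ[ℝ] 𝔰 →ₗ[ℝ] ℂ)
    (hanti : ∀ X Y : 𝔰, c X Y = - c Y X)
    (hcocycle : ∀ X Y Z : 𝔰, c ⁅X, Y⁆ Z + c ⁅Y, Z⁆ X + c ⁅Z, X⁆ Y = 0) :
    -- `c` is a 2-coboundary iff it vanishes on `𝔞 × 𝔞`:
    (∃ α : 𝔰 →ₗ[ℝ] ℂ, ∀ X Y : 𝔰, c X Y = α ⁅X, Y⁆) ↔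
      (∀ H H' : 𝔰, (H : 𝔤) ∈ 𝔞 → (H' : 𝔤) ∈ 𝔞 → c H H' = 0) :=
  statement5_general 𝔤 𝔞 h𝔞ab r φ Hv hHv 𝔰 h𝔰 c hanti hcocycle
end

section
/- Let c : 𝔰 × 𝔰 → ℂ be a Chevalley–Eilenberg 2-cocycle (for the trivial representation of 𝔰 on ℂ) satisfying the invariance condition c([[Z, X]]_𝔰, Y) + c(X, [[Z, Y]]_𝔰) = 0 for all Z ∈ 𝔨 and X, Y ∈ 𝔰. Then c is a Chevalley–Eilenberg 2-coboundary. (This is the algebraic content of the statement that every G-invariant closed differential 2-form on the symmetric bounded domain 𝔻 is the exterior derivative of an 𝕊-invariant 1-form.) -/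
/-!
Extend `c` to `𝔤` by `c̃(x, y) = c([x]_𝔰, [y]_𝔰)`. Split every argument of the cyclic sum of `c̃`
along `𝔤 = 𝔨 ⊕ 𝔰`: terms with two arguments in `𝔨` vanish because `[·]_𝔰` kills the subalgebra
`𝔨`, terms with one argument in `𝔨` vanish by the invariance of `c`, and what remains is the
cocycle identity of `c`. So `c̃` is a 2-cocycle on `𝔤`, and it suffices to know that real
2-cocycles `B` on `𝔤` are coboundaries (Whitehead). As the Killing form `κ` of `𝔤` is
nondegenerate, `B(x, y) = κ(γ x, y)` for a linear `γ`; the cocycle identity says that `γ` is a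
derivation, every derivation is inner, `γ = ad w`, and then `B(x, y) = κ(w, [x, y])`.

That `[·]_𝔰` kills `𝔨` amounts to `𝔨 ∩ 𝔰 = 0`: `κ` is negative definite on `𝔨` but positive
semidefinite on `𝔰 = 𝔞 ⊕ 𝔫`, because `𝔤_λ ⊥ 𝔤_μ` unless `λ + μ = 0`, which is impossible for
`λ, μ ∈ Σ⁺ ∪ {0}` not both zero.
-/

section Cocycle

variable {R L M N : Type*} [CommRing R] [LieRing L] [LieAlgebra R L]
  [AddCommGroup M] [Module R M] [AddCommGroup N] [Module R N]

def cyclicSum (c : L →ₗ[R] L →ₗ[R] M) (x y z : L) : M :=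
  c ⁅x, y⁆ z + c ⁅y, z⁆ x + c ⁅z, x⁆ y

structure IsTwoCocycle (c : L →ₗ[R] L →ₗ[R] M) : Prop where
  antisymm : ∀ x y, c x y = -c y x
  cyclicSum_eq_zero : ∀ x y z, cyclicSum c x y z = 0

variable (c : L →ₗ[R] L →ₗ[R] M)

lemma cyclicSum_rotate (x y z : L) : cyclicSum c x y z = cyclicSum c y z x := by
  simp only [cyclicSum]; abel

lemma cyclicSum_add_left (x x' y z : L) :
    cyclicSum c (x + x') y z = cyclicSum c x y z + cyclicSum c x' y z := by
  simp only [cyclicSum, add_lie, lie_add, map_add, LinearMap.add_apply]; abel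

lemma cyclicSum_eq_sub_add (x x' y z : L) :
    cyclicSum c x y z = cyclicSum c (x - x') y z + cyclicSum c x' y z := by
  rw [← cyclicSum_add_left, sub_add_cancel]

variable {c}

lemma IsTwoCocycle.compr₂ (hc : IsTwoCocycle c) (f : M →ₗ[R] N) :
    IsTwoCocycle (c.compr₂ f) where
  antisymm x y := by simp [hc.antisymm x y]
  cyclicSum_eq_zero x y z := by
    simpa [cyclicSum] using congrArg f (hc.cyclicSum_eq_zero x y z)

end Cocycle

section Whitehead

variable {K L : Type*} [Field K] [LieRing L] [LieAlgebra K L] [Module.Finite K L]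
  [LieAlgebra.IsKilling K L] {B : L →ₗ[K] L →ₗ[K] K}

noncomputable def IsTwoCocycle.toLieDerivation (hB : IsTwoCocycle B) : LieDerivation K L L where
  toLinearMap := ((killingForm K L).toDual
    (LieAlgebra.IsKilling.killingForm_nondegenerate K L)).symm.toLinearMap ∘ₗ B
  leibniz' x y := by
    apply ((killingForm K L).toDual (LieAlgebra.IsKilling.killingForm_nondegenerate K L)).injective
    ext z
    simp only [LinearMap.coe_comp, LinearEquiv.coe_coe, Function.comp_apply,
      LinearMap.BilinForm.apply_toDual_symm_apply, map_sub, LinearMap.sub_apply,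
      LinearMap.BilinForm.toDual_def, LieModule.traceForm_apply_lie_apply']
    rw [hB.antisymm y, hB.antisymm x, ← lie_skew x z, map_neg, LinearMap.neg_apply]
    have hcyc := hB.cyclicSum_eq_zero x y z
    unfold cyclicSum at hcyc
    linear_combination hcyc

lemma IsTwoCocycle.killingForm_toLieDerivation (hB : IsTwoCocycle B) (x y : L) :
    killingForm K L (hB.toLieDerivation x) y = B x y :=
  LinearMap.BilinForm.apply_toDual_symm_apply
    (hB := LieAlgebra.IsKilling.killingForm_nondegenerate K L) _ _

theorem IsTwoCocycle.exists_eq_comp_lie (hB : IsTwoCocycle B) :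
    ∃ a : Module.Dual K L, ∀ x y, B x y = a ⁅x, y⁆ := by
  obtain ⟨w, hw⟩ := LieDerivation.IsKilling.exists_eq_ad hB.toLieDerivation
  refine ⟨killingForm K L w, fun x y => ?_⟩
  rw [← hB.killingForm_toLieDerivation, ← hw, LieDerivation.ad_apply_apply,
    LieModule.traceForm_apply_lie_apply]

end Whitehead

theorem IsTwoCocycle.exists_eq_comp_lie_complex {L : Type*} [LieRing L] [LieAlgebra ℝ L]
    [Module.Finite ℝ L] [LieAlgebra.IsKilling ℝ L] {c : L →ₗ[ℝ] L →ₗ[ℝ] ℂ}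
    (hc : IsTwoCocycle c) : ∃ α : L →ₗ[ℝ] ℂ, ∀ x y, c x y = α ⁅x, y⁆ := by
  obtain ⟨a, ha⟩ := (hc.compr₂ Complex.reLm).exists_eq_comp_lie
  obtain ⟨b, hb⟩ := (hc.compr₂ Complex.imLm).exists_eq_comp_lie
  refine ⟨Complex.ofRealAm.toLinearMap ∘ₗ a + Complex.I • Complex.ofRealAm.toLinearMap ∘ₗ b,
    fun x y => Complex.ext ?_ ?_⟩
  · simpa using ha x y
  · simpa using hb x y

def fixedLieSubalgebra {R L : Type*} [CommRing R] [LieRing L] [LieAlgebra R L]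
    (σ : L →ₗ⁅R⁆ L) : LieSubalgebra R L where
  carrier := {X | σ X = X}
  add_mem' hX hY := by simp_all
  zero_mem' := by simp
  smul_mem' t X hX := by simp_all
  lie_mem' hX hY := by simp_all

section Extension

variable {R L M : Type*} [CommRing R] [LieRing L] [LieAlgebra R L] [AddCommGroup M] [Module R M]
  {𝔨 𝔰 : LieSubalgebra R L} {proj : L →ₗ[R] 𝔰}
  (hproj_sub_mem : ∀ X, X - proj X ∈ 𝔨) (hproj_coe : ∀ S : 𝔰, proj S = S)
  (hproj_eq_zero : ∀ Z ∈ 𝔨, proj Z = 0)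
  {c : 𝔰 →ₗ[R] 𝔰 →ₗ[R] M}

include hproj_sub_mem in
lemma proj_eq_zero_of_mem (h : ∀ S : 𝔰, (S : L) ∈ 𝔨 → S = 0) {Z : L} (hZ : Z ∈ 𝔨) :
    proj Z = 0 :=
  h _ (by simpa using 𝔨.sub_mem hZ (hproj_sub_mem Z))

include hproj_eq_zero in
lemma cyclicSum_compl₁₂_eq_zero_of_mem_of_mem {Z Z' : L} (hZ : Z ∈ 𝔨) (hZ' : Z' ∈ 𝔨) (X : L) :
    cyclicSum (c.compl₁₂ proj proj) Z Z' X = 0 := by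
  simp [cyclicSum, hproj_eq_zero _ hZ, hproj_eq_zero _ hZ', hproj_eq_zero _ (𝔨.lie_mem hZ hZ')]

include hproj_eq_zero hproj_coe in
lemma cyclicSum_compl₁₂_eq_zero_of_invariant (hc : ∀ X Y, c X Y = -c Y X)
    (hinv : ∀ Z ∈ 𝔨, ∀ X Y : 𝔰, c (proj ⁅Z, (X : L)⁆) Y + c X (proj ⁅Z, (Y : L)⁆) = 0)
    {Z : L} (hZ : Z ∈ 𝔨) (X Y : 𝔰) :
    cyclicSum (c.compl₁₂ proj proj) X Y Z = 0 := by
  simp only [cyclicSum, LinearMap.compl₁₂_apply, hproj_eq_zero _ hZ, map_zero, hproj_coe,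
    zero_add]
  rw [← lie_skew (Y : L) Z, map_neg, map_neg, LinearMap.neg_apply, ← hc X]
  exact (add_comm _ _).trans (hinv Z hZ X Y)

include hproj_sub_mem hproj_coe hproj_eq_zero in
lemma cyclicSum_compl₁₂_eq_zero_of_mem_left (hc : ∀ X Y, c X Y = -c Y X)
    (hinv : ∀ Z ∈ 𝔨, ∀ X Y : 𝔰, c (proj ⁅Z, (X : L)⁆) Y + c X (proj ⁅Z, (Y : L)⁆) = 0)
    {Z : L} (hZ : Z ∈ 𝔨) (Y W : L) :
    cyclicSum (c.compl₁₂ proj proj) Z Y W = 0 := by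
  set C := c.compl₁₂ proj proj
  have hYZ := cyclicSum_compl₁₂_eq_zero_of_mem_of_mem (c := c) hproj_eq_zero hZ
    (hproj_sub_mem Y) W
  have hWZ := cyclicSum_compl₁₂_eq_zero_of_mem_of_mem (c := c) hproj_eq_zero
    (hproj_sub_mem W) hZ (proj Y)
  calc cyclicSum C Z Y W
      = cyclicSum C (Y - proj Y) W Z + cyclicSum C (proj Y) W Z := by
        rw [cyclicSum_rotate, ← cyclicSum_eq_sub_add]
    _ = cyclicSum C (W - proj W) Z (proj Y) + cyclicSum C (proj W) Z (proj Y) := by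
        rw [← cyclicSum_rotate C Z, hYZ, zero_add, cyclicSum_rotate, ← cyclicSum_eq_sub_add]
    _ = 0 := by
        rw [hWZ, zero_add, ← cyclicSum_rotate]
        exact cyclicSum_compl₁₂_eq_zero_of_invariant hproj_coe hproj_eq_zero hc hinv hZ _ _

include hproj_coe in
lemma cyclicSum_compl₁₂_coe (S T U : 𝔰) :
    cyclicSum (c.compl₁₂ proj proj) S T U = cyclicSum c S T U := by
  simp only [cyclicSum, LinearMap.compl₁₂_apply, ← LieSubalgebra.coe_bracket, hproj_coe]

include hproj_sub_mem hproj_coe hproj_eq_zero in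
theorem IsTwoCocycle.compl₁₂_of_invariant (hc : IsTwoCocycle c)
    (hinv : ∀ Z ∈ 𝔨, ∀ X Y : 𝔰, c (proj ⁅Z, (X : L)⁆) Y + c X (proj ⁅Z, (Y : L)⁆) = 0) :
    IsTwoCocycle (c.compl₁₂ proj proj) where
  antisymm X Y := hc.antisymm _ _
  cyclicSum_eq_zero X Y W := by
    set C := c.compl₁₂ proj proj
    have hK {Z : L} (hZ : Z ∈ 𝔨) (Y W : L) : cyclicSum C Z Y W = 0 :=
      cyclicSum_compl₁₂_eq_zero_of_mem_left hproj_sub_mem hproj_coe hproj_eq_zero hc.antisymm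
        hinv hZ Y W
    rw [cyclicSum_eq_sub_add C X (proj X), hK (hproj_sub_mem X), zero_add, cyclicSum_rotate,
      cyclicSum_eq_sub_add C Y (proj Y), hK (hproj_sub_mem Y), zero_add, cyclicSum_rotate,
      cyclicSum_eq_sub_add C W (proj W), hK (hproj_sub_mem W), zero_add,
      cyclicSum_compl₁₂_coe hproj_coe]
    exact hc.cyclicSum_eq_zero _ _ _

end Extension

def IsLexPos {ι V : Type*} [LinearOrder ι] [AddCommGroup V] [Module ℝ V]
    (φ : ι → Module.Dual ℝ V) (v : V) : Prop :=
  ∃ k, 0 < φ k v ∧ ∀ j < k, φ j v = 0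

lemma IsLexPos.not_neg {ι V : Type*} [LinearOrder ι] [AddCommGroup V] [Module ℝ V]
    {φ : ι → Module.Dual ℝ V} {v : V} (hv : IsLexPos φ v) : ¬ IsLexPos φ (-v) := by
  rintro ⟨k', hk', hk'j⟩
  obtain ⟨k, hk, hkj⟩ := hv
  simp only [map_neg, Left.neg_pos_iff, neg_eq_zero] at hk' hk'j
  rcases lt_trichotomy k k' with h | rfl | h
  · exact hk.ne' (hk'j k h)
  · exact hk.not_gt hk'
  · exact hk'.ne (hkj k' h)

section RootSpaces

variable {𝔤 : Type} [LieRing 𝔤] [LieAlgebra ℝ 𝔤] {𝔞 : LieSubalgebra ℝ 𝔤}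

lemma killingForm_eq_zero_of_mem_rootSpace' {lam mu : Module.Dual ℝ 𝔞} (h : lam + mu ≠ 0)
    {x y : 𝔤} (hx : x ∈ rootSpace' 𝔞 lam) (hy : y ∈ rootSpace' 𝔞 mu) :
    killingForm ℝ 𝔤 x y = 0 := by
  obtain ⟨H, hH⟩ : ∃ H : 𝔞, lam H + mu H ≠ 0 := by
    by_contra! h'
    exact h (LinearMap.ext h')
  have key : lam H * killingForm ℝ 𝔤 x y = -(mu H * killingForm ℝ 𝔤 x y) := by
    rw [← smul_eq_mul, ← LinearMap.smul_apply, ← map_smul, ← hx H, ← smul_eq_mul, ← map_smul,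
      ← hy H, LieModule.traceForm_apply_lie_apply']
  have hsum : (lam H + mu H) * killingForm ℝ 𝔤 x y = 0 := by linear_combination key
  exact (mul_eq_zero.mp hsum).resolve_left hH

lemma mem_rootSpace'_zero_of_isAbelian (h𝔞ab : ∀ X Y : 𝔤, X ∈ 𝔞 → Y ∈ 𝔞 → ⁅X, Y⁆ = 0)
    {a : 𝔤} (ha : a ∈ 𝔞) : a ∈ rootSpace' 𝔞 0 := fun H => by
  simp [h𝔞ab _ _ H.2 ha]

variable {r : ℕ} {φ : Module.Basis (Fin r) ℝ (Module.Dual ℝ 𝔞)} {Hv : Module.Dual ℝ 𝔞 → 𝔞}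

lemma killingForm_eq_zero_of_mem_nSub {P : Submodule ℝ 𝔤}
    (h : ∀ lam ∈ posRootSet 𝔞 φ Hv, ∀ x ∈ rootSpace' 𝔞 lam, ∀ y ∈ P, killingForm ℝ 𝔤 x y = 0)
    {x : 𝔤} (hx : x ∈ nSub 𝔞 φ Hv) {y : 𝔤} (hy : y ∈ P) : killingForm ℝ 𝔤 x y = 0 := by
  suffices nSub 𝔞 φ Hv ≤ P.dualAnnihilator.comap (killingForm ℝ 𝔤) from
    (Submodule.mem_dualAnnihilator _).mp (this hx) y hy
  exact iSup₂_le fun lam hlam x hx => (Submodule.mem_dualAnnihilator _).mpr (h lam hlam x hx)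

lemma killingForm_eq_zero_of_mem_nSub_of_mem_abelian (h𝔞ab : ∀ X Y : 𝔤, X ∈ 𝔞 → Y ∈ 𝔞 → ⁅X, Y⁆ = 0)
    {x a : 𝔤} (hx : x ∈ nSub 𝔞 φ Hv) (ha : a ∈ 𝔞) : killingForm ℝ 𝔤 x a = 0 :=
  killingForm_eq_zero_of_mem_nSub (P := 𝔞.toSubmodule) (fun _ hlam _ hx _ ha =>
    killingForm_eq_zero_of_mem_rootSpace' (by simpa using hlam.1) hx
      (mem_rootSpace'_zero_of_isAbelian h𝔞ab ha)) hx ha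

variable (h𝔞 : ∀ V : 𝔞, (∀ H : 𝔞, killingForm ℝ 𝔤 V H = 0) → V = 0)
  (hHv : ∀ (lam : Module.Dual ℝ 𝔞) (H : 𝔞), killingForm ℝ 𝔤 (Hv lam) H = lam H)

include h𝔞 hHv in
lemma posRootSet_add_ne_zero {lam mu : Module.Dual ℝ 𝔞} (hlam : lam ∈ posRootSet 𝔞 φ Hv)
    (hmu : mu ∈ posRootSet 𝔞 φ Hv) : lam + mu ≠ 0 := by
  intro hsum
  have : Hv mu = -Hv lam := eq_neg_of_add_eq_zero_right <| h𝔞 _ fun H => by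
    simpa [hHv] using LinearMap.congr_fun hsum H
  exact IsLexPos.not_neg (φ := ⇑φ) hlam.2.2 (this ▸ hmu.2.2)

include h𝔞 hHv in
lemma killingForm_eq_zero_of_mem_nSub_of_mem_nSub {x y : 𝔤} (hx : x ∈ nSub 𝔞 φ Hv)
    (hy : y ∈ nSub 𝔞 φ Hv) : killingForm ℝ 𝔤 x y = 0 := by
  refine killingForm_eq_zero_of_mem_nSub (fun lam hlam x hx y hy => ?_) hx hy
  rw [LieModule.traceForm_comm]
  exact killingForm_eq_zero_of_mem_nSub (fun mu hmu y hy x hx =>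
    killingForm_eq_zero_of_mem_rootSpace' (posRootSet_add_ne_zero h𝔞 hHv hmu hlam) hy hx) hy hx

include h𝔞 hHv in
lemma killingForm_self_nonneg_of_mem_sup_nSub (h𝔞ab : ∀ X Y : 𝔤, X ∈ 𝔞 → Y ∈ 𝔞 → ⁅X, Y⁆ = 0)
    (h𝔞pos : ∀ a ∈ 𝔞, 0 ≤ killingForm ℝ 𝔤 a a) {S : 𝔤}
    (hS : S ∈ 𝔞.toSubmodule ⊔ nSub 𝔞 φ Hv) : 0 ≤ killingForm ℝ 𝔤 S S := by
  obtain ⟨a, ha, n, hn, rfl⟩ := Submodule.mem_sup.mp hS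
  have han := killingForm_eq_zero_of_mem_nSub_of_mem_abelian h𝔞ab hn ha
  have hnn := killingForm_eq_zero_of_mem_nSub_of_mem_nSub h𝔞 hHv hn hn
  have hna : killingForm ℝ 𝔤 a n = 0 := by rw [LieModule.traceForm_comm]; exact han
  simpa [han, hna, hnn] using h𝔞pos a ha

end RootSpaces

section CartanInvolution

variable {𝔤 : Type} [LieRing 𝔤] [LieAlgebra ℝ 𝔤] {σ : 𝔤 →ₗ⁅ℝ⁆ 𝔤}
  (hσpos : ∀ X : 𝔤, X ≠ 0 → 0 < -(killingForm ℝ 𝔤 X (σ X)))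

include hσpos

lemma killingForm_self_pos_of_apply_eq_neg {X : 𝔤} (hX : σ X = -X) (h0 : X ≠ 0) :
    0 < killingForm ℝ 𝔤 X X := by
  simpa [hX] using hσpos X h0

lemma killingForm_self_neg_of_apply_eq_self {X : 𝔤} (hX : σ X = X) (h0 : X ≠ 0) :
    killingForm ℝ 𝔤 X X < 0 := by
  simpa [hX] using hσpos X h0

lemma eq_zero_of_apply_eq_self_of_mem_sup_nSub {𝔞 : LieSubalgebra ℝ 𝔤}
    (h𝔞ab : ∀ X Y : 𝔤, X ∈ 𝔞 → Y ∈ 𝔞 → ⁅X, Y⁆ = 0) (h𝔞p : ∀ X ∈ 𝔞, σ X = -X)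
    {r : ℕ} {φ : Module.Basis (Fin r) ℝ (Module.Dual ℝ 𝔞)} {Hv : Module.Dual ℝ 𝔞 → 𝔞}
    (hHv : ∀ (lam : Module.Dual ℝ 𝔞) (H : 𝔞), killingForm ℝ 𝔤 (Hv lam : 𝔤) (H : 𝔤) = lam H)
    {S : 𝔤} (hS : S ∈ 𝔞.toSubmodule ⊔ nSub 𝔞 φ Hv) (hσS : σ S = S) : S = 0 := by
  have h𝔞 (V : 𝔞) (hV : ∀ H : 𝔞, killingForm ℝ 𝔤 (V : 𝔤) (H : 𝔤) = 0) : V = 0 := by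
    by_contra h0
    have := killingForm_self_pos_of_apply_eq_neg hσpos (h𝔞p V V.2) (by simpa using h0)
    exact this.ne' (hV V)
  have h𝔞pos (a : 𝔤) (ha : a ∈ 𝔞) : 0 ≤ killingForm ℝ 𝔤 a a := by
    rcases eq_or_ne a 0 with rfl | h0
    · simp
    · exact (killingForm_self_pos_of_apply_eq_neg hσpos (h𝔞p a ha) h0).le
  by_contra h0
  exact (killingForm_self_neg_of_apply_eq_self hσpos hσS h0).not_ge
    (killingForm_self_nonneg_of_mem_sup_nSub h𝔞 hHv h𝔞ab h𝔞pos hS)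

end CartanInvolution

theorem statement6_general
    (𝔤 : Type) [LieRing 𝔤] [LieAlgebra ℝ 𝔤] [Module.Finite ℝ 𝔤]
    [LieAlgebra.IsSemisimple ℝ 𝔤]
    -- `σ` is a Cartan involution of `𝔤`:
    (σ : 𝔤 →ₗ⁅ℝ⁆ 𝔤)
    (hσpos : ∀ X : 𝔤, X ≠ 0 → 0 < -(killingForm ℝ 𝔤 X (σ X)))
    -- `𝔞` is a maximal abelian subalgebra contained in `𝔭 = {X : σ X = -X}`:
    (𝔞 : LieSubalgebra ℝ 𝔤)
    (h𝔞ab : ∀ X Y : 𝔤, X ∈ 𝔞 → Y ∈ 𝔞 → ⁅X, Y⁆ = 0)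
    (h𝔞p : ∀ X ∈ 𝔞, σ X = -X)
    -- `φ` is a basis of `𝔞*` and `Hv lam = H_λ` is determined by the Killing form:
    (r : ℕ) (φ : Module.Basis (Fin r) ℝ (Module.Dual ℝ 𝔞))
    (Hv : Module.Dual ℝ 𝔞 → 𝔞)
    (hHv : ∀ (lam : Module.Dual ℝ 𝔞) (H : 𝔞),
      killingForm ℝ 𝔤 (Hv lam : 𝔤) (H : 𝔤) = lam H)
    -- `𝔰` is the Iwasawa subalgebra `𝔞 ⊕ 𝔫`:
    (𝔰 : LieSubalgebra ℝ 𝔤) (h𝔰 : 𝔰.toSubmodule = 𝔞.toSubmodule ⊔ nSub 𝔞 φ Hv)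
    -- `proj = [·]_𝔰` is the projection of `𝔤` onto `𝔰` along `𝔨` (Iwasawa decomposition):
    (proj : 𝔤 →ₗ[ℝ] 𝔰)
    (hproj𝔨 : ∀ X : 𝔤, σ (X - (proj X : 𝔤)) = X - (proj X : 𝔤))
    (hproj𝔰 : ∀ S : 𝔰, proj (S : 𝔤) = S)
    -- `c` is a Chevalley–Eilenberg 2-cocycle on `𝔰` with trivial coefficients in `ℂ`:
    (c : 𝔰 →ₗ[ℝ] 𝔰 →ₗ[ℝ] ℂ)
    (hanti : ∀ X Y : 𝔰, c X Y = - c Y X)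
    (hcocycle : ∀ X Y Z : 𝔰, c ⁅X, Y⁆ Z + c ⁅Y, Z⁆ X + c ⁅Z, X⁆ Y = 0)
    -- `c` satisfies the infinitesimal `G`-invariance condition:
    (hinv : ∀ Z : 𝔤, σ Z = Z → ∀ X Y : 𝔰,
      c (proj ⁅Z, (X : 𝔤)⁆) Y + c X (proj ⁅Z, (Y : 𝔤)⁆) = 0) :
    -- `c` is a 2-coboundary:
    ∃ α : 𝔰 →ₗ[ℝ] ℂ, ∀ X Y : 𝔰, c X Y = α ⁅X, Y⁆ := by
  set 𝔨 := fixedLieSubalgebra σ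
  have h𝔰𝔨 (S : 𝔰) (hS : (S : 𝔤) ∈ 𝔨) : S = 0 := by
    have hS𝔰 : (S : 𝔤) ∈ 𝔰.toSubmodule := S.2
    rw [h𝔰] at hS𝔰
    exact Subtype.ext (eq_zero_of_apply_eq_self_of_mem_sup_nSub hσpos h𝔞ab h𝔞p hHv hS𝔰 hS)
  have hproj_eq_zero (Z : 𝔤) (hZ : Z ∈ 𝔨) : proj Z = 0 := proj_eq_zero_of_mem hproj𝔨 h𝔰𝔨 hZ
  obtain ⟨α, hα⟩ := (IsTwoCocycle.compl₁₂_of_invariant hproj𝔨 hproj𝔰 hproj_eq_zero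
    ⟨hanti, hcocycle⟩ hinv).exists_eq_comp_lie_complex
  refine ⟨α ∘ₗ 𝔰.toSubmodule.subtype, fun X Y => ?_⟩
  rw [LinearMap.comp_apply, Submodule.subtype_apply, LieSubalgebra.coe_bracket, ← hα]
  simp [hproj𝔰]

/-- A Chevalley–Eilenberg 2-cocycle `c` on `𝔰` satisfying the `𝔨`-invariance
condition `c([[Z,X]]_𝔰, Y) + c(X, [[Z,Y]]_𝔰) = 0` for all `Z ∈ 𝔨`, `X, Y ∈ 𝔰` is a
2-coboundary. -/
theorem statement6
    (𝔤 : Type) [LieRing 𝔤] [LieAlgebra ℝ 𝔤] [Module.Finite ℝ 𝔤]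
    [LieAlgebra.IsSemisimple ℝ 𝔤]
    -- `σ` is a Cartan involution of `𝔤`:
    (σ : 𝔤 →ₗ⁅ℝ⁆ 𝔤) (hσinv : ∀ X, σ (σ X) = X)
    (hσpos : ∀ X : 𝔤, X ≠ 0 → 0 < -(killingForm ℝ 𝔤 X (σ X)))
    -- `𝔞` is a maximal abelian subalgebra contained in `𝔭 = {X : σ X = -X}`:
    (𝔞 : LieSubalgebra ℝ 𝔤)
    (h𝔞ab : ∀ X Y : 𝔤, X ∈ 𝔞 → Y ∈ 𝔞 → ⁅X, Y⁆ = 0)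
    (h𝔞p : ∀ X ∈ 𝔞, σ X = -X)
    (h𝔞max : ∀ 𝔟 : LieSubalgebra ℝ 𝔤, (∀ X Y : 𝔤, X ∈ 𝔟 → Y ∈ 𝔟 → ⁅X, Y⁆ = 0) →
      (∀ X ∈ 𝔟, σ X = -X) → 𝔞 ≤ 𝔟 → 𝔟 = 𝔞)
    -- `φ` is a basis of `𝔞*` and `Hv lam = H_λ` is determined by the Killing form:
    (r : ℕ) (φ : Module.Basis (Fin r) ℝ (Module.Dual ℝ 𝔞))
    (Hv : Module.Dual ℝ 𝔞 → 𝔞)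
    (hHv : ∀ (lam : Module.Dual ℝ 𝔞) (H : 𝔞),
      killingForm ℝ 𝔤 (Hv lam : 𝔤) (H : 𝔤) = lam H)
    -- `𝔰` is the Iwasawa subalgebra `𝔞 ⊕ 𝔫`:
    (𝔰 : LieSubalgebra ℝ 𝔤) (h𝔰 : 𝔰.toSubmodule = 𝔞.toSubmodule ⊔ nSub 𝔞 φ Hv)
    -- `proj = [·]_𝔰` is the projection of `𝔤` onto `𝔰` along `𝔨` (Iwasawa decomposition):
    (proj : 𝔤 →ₗ[ℝ] 𝔰)
    (hproj𝔨 : ∀ X : 𝔤, σ (X - (proj X : 𝔤)) = X - (proj X : 𝔤))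
    (hproj𝔰 : ∀ S : 𝔰, proj (S : 𝔤) = S)
    -- `c` is a Chevalley–Eilenberg 2-cocycle on `𝔰` with trivial coefficients in `ℂ`:
    (c : 𝔰 →ₗ[ℝ] 𝔰 →ₗ[ℝ] ℂ)
    (hanti : ∀ X Y : 𝔰, c X Y = - c Y X)
    (hcocycle : ∀ X Y Z : 𝔰, c ⁅X, Y⁆ Z + c ⁅Y, Z⁆ X + c ⁅Z, X⁆ Y = 0)
    -- `c` satisfies the infinitesimal `G`-invariance condition:
    (hinv : ∀ Z : 𝔤, σ Z = Z → ∀ X Y : 𝔰,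
      c (proj ⁅Z, (X : 𝔤)⁆) Y + c X (proj ⁅Z, (Y : 𝔤)⁆) = 0) :
    -- `c` is a 2-coboundary:
    ∃ α : 𝔰 →ₗ[ℝ] ℂ, ∀ X Y : 𝔰, c X Y = α ⁅X, Y⁆ :=
  statement6_general 𝔤 σ hσpos 𝔞 h𝔞ab h𝔞p r φ Hv hHv 𝔰 h𝔰 proj hproj𝔨 hproj𝔰 c hanti hcocycle hinv
end
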